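/- For every θ > 0, lim_{m→∞} m · E[1 − e^{−θτ/m^{1/α}}] = Γ(1−α) θ^α, where the limit is over positive integers m and Γ is the Gamma function. -/

import Mathlib

/-!
By the layer-cake formula, `E[1 - exp (-λτ)] = ∫₀^∞ λ exp (-λt) P(τ > t) dt`. Substituting
`s = λt` and multiplying by `λ^(-α)` turns this into
`∫₀^∞ exp (-s) s^(-α) · (s/λ)^α P(τ > s/λ) ds`, whose last factor is bounded and tends to `1`
as `λ → 0⁺`; dominated convergence gives the limit `Γ(1 - α)`. The theorem is the case
`λ = θ / m^(1/α)`, for which `m = θ^α λ^(-α)`.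
-/

open MeasureTheory ProbabilityTheory Set Filter Topology Real

lemma integral_mul_exp_neg_mul (l x : ℝ) :
    ∫ t in (0)..x, l * exp (-(l * t)) = 1 - exp (-(l * x)) := by
  have hderiv : ∀ t ∈ uIcc 0 x,
      HasDerivAt (fun t => -exp (-(l * t))) (l * exp (-(l * t))) t := fun t _ => by
    simpa [mul_comm] using (((hasDerivAt_id t).const_mul l).fun_neg.exp).fun_neg
  rw [intervalIntegral.integral_eq_sub_of_hasDerivAt hderiv
    ((by fun_prop : Continuous fun t => l * exp (-(l * t))).intervalIntegrable _ _)]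
  simp [sub_eq_add_neg, add_comm]

lemma antitone_measureReal_lt {Ω : Type*} [MeasurableSpace Ω] (μ : Measure Ω) [IsFiniteMeasure μ]
    (τ : Ω → ℝ) : Antitone fun t => μ.real {ω | t < τ ω} :=
  fun _ _ hst => measureReal_mono fun _ h => lt_of_le_of_lt hst h

lemma integral_one_sub_exp_neg_mul_eq_integral_tail {Ω : Type*} [MeasurableSpace Ω]
    (μ : Measure Ω) [IsFiniteMeasure μ] {τ : Ω → ℝ} (hτ : AEMeasurable τ μ)
    (hτnn : 0 ≤ᵐ[μ] τ) {l : ℝ} (hl : 0 ≤ l) :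
    ∫ ω, (1 - exp (-(l * τ ω))) ∂μ = ∫ t in Ioi 0, l * exp (-(l * t)) * μ.real {ω | t < τ ω} := by
  have hlayer := lintegral_comp_eq_lintegral_meas_lt_mul μ hτnn hτ
    (fun t _ => (by fun_prop : Continuous fun t => l * exp (-(l * t))).intervalIntegrable 0 t)
    (ae_of_all _ fun t => by positivity)
  simp only [integral_mul_exp_neg_mul] at hlayer
  rw [integral_eq_lintegral_of_nonneg_ae, integral_eq_lintegral_of_nonneg_ae, hlayer]
  · congr 1
    refine lintegral_congr fun t => ?_
    rw [ENNReal.ofReal_mul' (measureReal_nonneg (μ := μ)), ofReal_measureReal, mul_comm]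
  · exact ae_of_all _ fun t => by positivity
  · exact ((by fun_prop : Measurable fun t => l * exp (-(l * t))).mul
      (antitone_measureReal_lt μ τ).measurable).aestronglyMeasurable
  · filter_upwards [hτnn] with ω hω
    simpa using mul_nonneg hl hω
  · exact (by fun_prop : Measurable fun x => 1 - exp (-(l * x))).comp_aemeasurable hτ
      |>.aestronglyMeasurable

lemma integral_Ioi_mul_exp_neg_mul_eq (G : ℝ → ℝ) {l : ℝ} (hl : 0 < l) :
    ∫ t in Ioi 0, l * exp (-(l * t)) * G t = ∫ s in Ioi 0, exp (-s) * G (s / l) := by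
  have h := integral_comp_mul_left_Ioi' (fun s => exp (-s) * G (s / l)) 0 hl
  simp only [mul_zero, mul_div_cancel_left₀ _ hl.ne', smul_eq_mul] at h
  rw [← h, ← integral_const_mul]
  simp only [mul_assoc]

lemma rpow_neg_mul_integral_Ioi_mul_exp_neg_mul_eq (α : ℝ) (G : ℝ → ℝ) {l : ℝ} (hl : 0 < l) :
    l ^ (-α) * ∫ t in Ioi 0, l * exp (-(l * t)) * G t
      = ∫ s in Ioi 0, exp (-s) * s ^ (-α) * ((s / l) ^ α * G (s / l)) := by
  rw [integral_Ioi_mul_exp_neg_mul_eq G hl, ← integral_const_mul]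
  refine setIntegral_congr_fun measurableSet_Ioi fun s (hs : 0 < s) => ?_
  rw [div_rpow hs.le hl.le, rpow_neg hs.le, rpow_neg hl.le]
  have := (rpow_pos_of_pos hs α).ne'
  have := (rpow_pos_of_pos hl α).ne'
  field_simp

theorem tendsto_rpow_neg_mul_integral_Ioi_mul_exp_neg_mul {α c C : ℝ} (hα : α < 1) {G : ℝ → ℝ}
    (hGm : Measurable G) (hbound : ∀ u > 0, |u ^ α * G u| ≤ C)
    (hlim : Tendsto (fun u => u ^ α * G u) atTop (𝓝 c)) :
    Tendsto (fun l => l ^ (-α) * ∫ t in Ioi 0, l * exp (-(l * t)) * G t) (𝓝[>] 0)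
      (𝓝 (c * Gamma (1 - α))) := by
  have hkernel : IntegrableOn (fun s => exp (-s) * s ^ (-α)) (Ioi 0) := by
    simpa [sub_sub_cancel_left] using GammaIntegral_convergent (s := 1 - α) (by linarith)
  have hGamma : ∫ s in Ioi 0, exp (-s) * s ^ (-α) * c = c * Gamma (1 - α) := by
    rw [integral_mul_const, Gamma_eq_integral (by linarith), mul_comm]
    simp [sub_sub_cancel_left]
  rw [← hGamma]
  refine (tendsto_integral_filter_of_dominated_convergence
    (F := fun l s => exp (-s) * s ^ (-α) * ((s / l) ^ α * G (s / l)))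
    (fun s => exp (-s) * s ^ (-α) * C) ?_ ?_ (hkernel.mul_const C) ?_).congr' ?_
  · exact Eventually.of_forall fun l => by fun_prop
  · filter_upwards [self_mem_nhdsWithin] with l (hl : 0 < l)
    refine (ae_restrict_iff' measurableSet_Ioi).2 (ae_of_all _ fun s (hs : 0 < s) => ?_)
    rw [norm_mul, Real.norm_of_nonneg (by positivity)]
    exact mul_le_mul_of_nonneg_left (hbound _ (div_pos hs hl)) (by positivity)
  · refine (ae_restrict_iff' measurableSet_Ioi).2 (ae_of_all _ fun s (hs : 0 < s) => ?_)
    refine (hlim.comp ?_).const_mul _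
    exact (tendsto_inv_nhdsGT_zero.const_mul_atTop hs).congr fun l => (div_eq_mul_inv s l).symm
  · filter_upwards [self_mem_nhdsWithin] with l (hl : 0 < l)
    exact (rpow_neg_mul_integral_Ioi_mul_exp_neg_mul_eq α G hl).symm

lemma exists_forall_abs_rpow_mul_le_of_tendsto {α c B : ℝ} (hα : 0 ≤ α) {G : ℝ → ℝ}
    (hGB : ∀ u > 0, |G u| ≤ B) (hlim : Tendsto (fun u => u ^ α * G u) atTop (𝓝 c)) :
    ∃ C, ∀ u > 0, |u ^ α * G u| ≤ C := by
  obtain ⟨T, hT⟩ := eventually_atTop.1 (hlim.abs.eventually (eventually_le_nhds (lt_add_one |c|)))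
  refine ⟨max (|c| + 1) (T ^ α * B), fun u hu => ?_⟩
  rcases le_or_gt T u with hTu | huT
  · exact (hT u hTu).trans (le_max_left _ _)
  · refine le_max_of_le_right ?_
    rw [abs_mul, abs_of_pos (rpow_pos_of_pos hu α)]
    exact mul_le_mul (rpow_le_rpow hu.le huT.le hα) (hGB u hu) (abs_nonneg _)
      (rpow_nonneg (hu.trans huT).le α)

lemma tendsto_rpow_mul_measureReal_lt_of_tail {Ω : Type*} [MeasurableSpace Ω] {μ : Measure Ω}
    {τ : Ω → ℝ} {α c : ℝ} (hc : 0 ≤ c) {L : ℝ → ℝ} (hL : Tendsto L atTop (𝓝 c))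
    (htail : ∀ t : ℝ, 0 < t → μ {ω | t < τ ω} = ENNReal.ofReal (L t / t ^ α)) :
    Tendsto (fun t => t ^ α * μ.real {ω | t < τ ω}) atTop (𝓝 c) := by
  have hmax : Tendsto (fun t => max (L t) 0) atTop (𝓝 c) := by
    simpa [max_eq_left hc] using hL.max (tendsto_const_nhds (x := (0 : ℝ)))
  refine hmax.congr' ?_
  filter_upwards [eventually_gt_atTop 0] with t ht
  have htα := rpow_pos_of_pos ht α
  rw [measureReal_def, htail t ht, ENNReal.toReal_ofReal', mul_max_of_nonneg _ _ htα.le,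
    mul_div_cancel₀ _ htα.ne', mul_zero]

/-- For every `θ > 0`, `lim_{m→∞} m · E[1 − e^{−θτ/m^{1/α}}] = Γ(1−α) θ^α`,
the limit being over positive integers `m`. -/
theorem lim_m_mul_one_sub_exp_moment
    {Ω : Type*} [MeasureSpace Ω] [IsProbabilityMeasure (ℙ : Measure Ω)]
    (α : ℝ) (hα : α ∈ Set.Ioo (0 : ℝ) 1)
    (τ : Ω → ℝ) (hτmeas : Measurable τ) (hτnn : ∀ ω, 0 ≤ τ ω)
    (Lf : ℝ → ℝ) (hLf : Filter.Tendsto Lf Filter.atTop (nhds 1))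
    (htail : ∀ t : ℝ, 0 < t → ℙ {ω | t < τ ω} = ENNReal.ofReal (Lf t / t ^ α))
    (θ : ℝ) (hθ : 0 < θ) :
    Filter.Tendsto
      (fun m : ℕ => (m : ℝ) * ∫ ω, (1 - Real.exp (-(θ * τ ω / (m : ℝ) ^ (1 / α)))) ∂ℙ)
      Filter.atTop
      (nhds (Real.Gamma (1 - α) * θ ^ α)) := by
  obtain ⟨hα0, hα1⟩ := hα
  have htail_lim := tendsto_rpow_mul_measureReal_lt_of_tail zero_le_one hLf htail
  obtain ⟨C, hC⟩ := exists_forall_abs_rpow_mul_le_of_tendsto hα0.le (B := 1)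
    (fun u _ => (abs_of_nonneg measureReal_nonneg).trans_le measureReal_le_one) htail_lim
  have hscale : Tendsto (fun m : ℕ => θ / (m : ℝ) ^ (1 / α)) atTop (𝓝[>] 0) :=
    tendsto_nhdsWithin_iff.2 ⟨tendsto_const_nhds.div_atTop
      ((tendsto_rpow_atTop (by positivity)).comp tendsto_natCast_atTop_atTop),
      eventually_atTop.2 ⟨1, fun m hm => show 0 < θ / (m : ℝ) ^ (1 / α) by positivity⟩⟩
  have hlim := ((tendsto_rpow_neg_mul_integral_Ioi_mul_exp_neg_mul hα1
    (antitone_measureReal_lt ℙ τ).measurable hC htail_lim).comp hscale).const_mul (θ ^ α)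
  rw [one_mul, mul_comm] at hlim
  refine hlim.congr' ?_
  filter_upwards [eventually_gt_atTop 0] with m hm
  have hm' : (0 : ℝ) < m := Nat.cast_pos.2 hm
  have hl : 0 < θ / (m : ℝ) ^ (1 / α) := by positivity
  have hscale_pow : (θ / (m : ℝ) ^ (1 / α)) ^ α = θ ^ α / m := by
    rw [div_rpow hθ.le (by positivity), ← rpow_mul hm'.le, one_div_mul_cancel hα0.ne', rpow_one]
  rw [Function.comp_apply, ← integral_one_sub_exp_neg_mul_eq_integral_tail ℙ
    hτmeas.aemeasurable (ae_of_all _ hτnn) hl.le, ← mul_assoc, rpow_neg hl.le, hscale_pow]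
  field_simp
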